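/- arXiv:2306.05028 — 7 statements merged into one kernel-verified Lean document; each statement's English description precedes it below -/
import Mathlib

section
/- For every belief profile b ∈ (0,1)^n there exists a naive competitive equilibrium, i.e., there exist vectors s^A, s^B ∈ [0,1]^n with s_i^A · s_i^B = 0 for every i, and a price p ∈ (0,1), such that (1/p)·∑_{i=1}^n s_i^A = (1/(1−p))·∑_{i=1}^n s_i^B, and for every i: if b_i > p then s_i^A = 1 and s_i^B = 0, and if b_i < p then s_i^A = 0 and s_i^B = 1. -/
/-- `(sA, sB)` together with price `p` is a naive competitive equilibrium for
the belief profile `b`: admissible investments, market clearing, and every agent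
whose belief differs from the price invests her whole endowment on the side of
her belief. -/
def NaiveEquilibrium (n : ℕ) (b sA sB : Fin n → ℝ) (p : ℝ) : Prop :=
  p ∈ Set.Ioo (0 : ℝ) 1 ∧
  (∀ i, sA i ∈ Set.Icc (0 : ℝ) 1 ∧ sB i ∈ Set.Icc (0 : ℝ) 1 ∧ sA i * sB i = 0) ∧
  (1 / p) * (∑ i, sA i) = (1 / (1 - p)) * (∑ i, sB i) ∧
  (∀ i, b i > p → sA i = 1 ∧ sB i = 0) ∧
  (∀ i, b i < p → sA i = 0 ∧ sB i = 1)


/-!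
Call `p` admissible if `#{i | p < bᵢ} ≤ p n ≤ #{i | p ≤ bᵢ}`. At an admissible price the
agents with `bᵢ ≠ p` invest fully on their side, and the market clears once all agents with
`bᵢ = p` invest a common fraction on the short side.

An admissible price exists: among the beliefs and the multiples of `1 / n`, take the largest `p`
with `p n ≤ #{i | p ≤ bᵢ}`. If `p n < #{i | p < bᵢ}`, the smaller of the least belief above `p`
and `#{i | p < bᵢ} / n` would be a larger such candidate.
-/

open Finset

theorem exists_tie_allocation {p A B T : ℝ} (hp : p ∈ Set.Ioo 0 1)
    (hlow : A ≤ p * (A + B + T)) (hhigh : p * (A + B + T) ≤ A + T) :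
    ∃ x ∈ Set.Icc (0 : ℝ) 1, ∃ y ∈ Set.Icc (0 : ℝ) 1,
      x * y = 0 ∧ (1 - p) * (A + T * x) = p * (B + T * y) := by
  obtain ⟨hp0, hp1⟩ := hp
  rcases (show 0 ≤ T by linarith).eq_or_lt with rfl | hT
  · refine ⟨0, by simp, 0, by simp, by simp, ?_⟩
    have hA : p * (A + B + 0) = A := le_antisymm (by simpa using hhigh) (by simpa using hlow)
    linear_combination -hA
  rcases le_total ((1 - p) * A) (p * B) with h | h
  · refine ⟨(p * B - (1 - p) * A) / ((1 - p) * T), ⟨?_, ?_⟩, 0, by simp, by simp, ?_⟩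
    · exact div_nonneg (by linarith) (by nlinarith)
    · rw [div_le_one (by nlinarith)]
      linarith
    · field_simp
      ring
  · refine ⟨0, by simp, ((1 - p) * A - p * B) / (p * T), ⟨?_, ?_⟩, by simp, ?_⟩
    · exact div_nonneg (by linarith) (by positivity)
    · rw [div_le_one (by positivity)]
      linarith
    · field_simp
      ring

theorem exists_naiveEquilibrium_of_card_bounds {n : ℕ} (b : Fin n → ℝ) {p : ℝ}
    (hp : p ∈ Set.Ioo 0 1) (hlow : (#{i | p < b i} : ℝ) ≤ p * n)
    (hhigh : p * n ≤ #{i | p ≤ b i}) :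
    ∃ sA sB, NaiveEquilibrium n b sA sB p := by
  have hcard_univ : (n : ℝ) = #{i | p < b i} + #{i | b i < p} + #{i | b i = p} := by
    simp only [← sum_boole, ← sum_add_distrib]
    calc (n : ℝ) = ∑ _ : Fin n, 1 := by simp
      _ = _ := sum_congr rfl fun i _ => by
        rcases lt_trichotomy (b i) p with h | h | h <;> simp [h, lt_asymm, ne_of_gt, ne_of_lt]
  have hcard_ge : (#{i | p ≤ b i} : ℝ) = #{i | p < b i} + #{i | b i = p} := by
    simp only [← sum_boole, ← sum_add_distrib]
    exact sum_congr rfl fun i _ => by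
      rcases lt_trichotomy (b i) p with h | h | h <;> simp [h, lt_asymm, ne_of_gt, ne_of_lt]
  rw [hcard_univ] at hlow hhigh
  rw [hcard_ge] at hhigh
  obtain ⟨x, hx, y, hy, hxy, hclear⟩ := exists_tie_allocation hp hlow hhigh
  refine ⟨fun i => (if p < b i then 1 else 0) + (if b i = p then x else 0),
    fun i => (if b i < p then 1 else 0) + (if b i = p then y else 0), hp, fun i => ?_, ?_,
    fun i hi => by simp [hi, hi.ne', hi.not_gt], fun i hi => by simp [hi, hi.ne, hi.not_gt]⟩
  · rcases lt_trichotomy (b i) p with h | h | h <;>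
      simp [h, lt_asymm, ne_of_gt, ne_of_lt, hx.1, hx.2, hy.1, hy.2, hxy]
  · simp only [sum_add_distrib, sum_boole, ← sum_filter, sum_const, nsmul_eq_mul]
    obtain ⟨hp0, hp1⟩ := hp
    rw [div_mul_eq_mul_div, div_mul_eq_mul_div, div_eq_div_iff hp0.ne' (by linarith)]
    linear_combination hclear

noncomputable def priceCandidates {n : ℕ} (b : Fin n → ℝ) : Finset ℝ :=
  univ.image b ∪ (range (n + 1)).image fun k : ℕ => (k : ℝ) / n

theorem exists_mem_priceCandidates_of_mul_lt_card {n : ℕ} (b : Fin n → ℝ) {p : ℝ}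
    (hn : 0 < n) (hp : 0 ≤ p) (h : p * n < #{i | p < b i}) :
    ∃ q ∈ priceCandidates b, p < q ∧ q * n ≤ #{i | q ≤ b i} := by
  have hn' : (0 : ℝ) < n := by exact_mod_cast hn
  obtain ⟨j, hj, hj_min⟩ := exists_min_image {i | p < b i} b
    (card_pos.1 (by exact_mod_cast (mul_nonneg hp hn'.le).trans_lt h))
  have hpj : p < b j := (mem_filter.1 hj).2
  refine ⟨min (b j) (#{i | p < b i} / n), ?_, lt_min hpj ((lt_div_iff₀ hn').2 h), ?_⟩
  · rcases min_choice (b j) (#{i | p < b i} / n) with hq | hq <;> rw [hq, priceCandidates]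
    · exact mem_union_left _ (mem_image_of_mem b (mem_univ j))
    · have hcard : #{i | p < b i} < n + 1 :=
        Nat.lt_succ_of_le ((card_le_univ _).trans_eq (by simp))
      exact mem_union_right _ (mem_image.2 ⟨_, mem_range.2 hcard, rfl⟩)
  calc min (b j) (#{i | p < b i} / n) * n ≤ #{i | p < b i} / n * n := by
        gcongr
        exact min_le_right _ _
    _ = #{i | p < b i} := div_mul_cancel₀ _ hn'.ne'
    _ ≤ #{i | min (b j) (#{i | p < b i} / n) ≤ b i} := by
      gcongr with i _
      exact fun hi => (min_le_left _ _).trans (hj_min i (mem_filter.2 ⟨mem_univ i, hi⟩))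

theorem exists_price_card_bounds {n : ℕ} (hn : 0 < n) (b : Fin n → ℝ)
    (hb : ∀ i, b i ∈ Set.Ioo (0 : ℝ) 1) :
    ∃ p ∈ Set.Ioo (0 : ℝ) 1, (#{i | p < b i} : ℝ) ≤ p * n ∧ p * n ≤ #{i | p ≤ b i} := by
  have hn' : (0 : ℝ) < n := by exact_mod_cast hn
  set X := {q ∈ priceCandidates b | q * n ≤ #{i | q ≤ b i}}
  have h0 : 0 ∈ X := mem_filter.2
    ⟨mem_union_right _ (mem_image.2 ⟨0, by simp⟩), by simp⟩
  obtain ⟨p, hpX, hp_max⟩ : ∃ p ∈ X, ∀ q ∈ X, q ≤ p :=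
    ⟨X.max' ⟨0, h0⟩, X.max'_mem _, fun q hq => X.le_max' q hq⟩
  have hp_high : p * n ≤ #{i | p ≤ b i} := (mem_filter.1 hpX).2
  have hp_low : (#{i | p < b i} : ℝ) ≤ p * n := by
    by_contra! h
    obtain ⟨q, hq, hpq, hq_high⟩ :=
      exists_mem_priceCandidates_of_mul_lt_card b hn (hp_max 0 h0) h
    exact (hp_max q (mem_filter.2 ⟨hq, hq_high⟩)).not_gt hpq
  refine ⟨p, ⟨?_, ?_⟩, hp_low, hp_high⟩
  · refine (hp_max 0 h0).lt_of_ne' fun hp0 => ?_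
    have : #{i | p < b i} = n := by
      rw [filter_true_of_mem fun i _ => hp0 ▸ (hb i).1, card_univ, Fintype.card_fin]
    rw [this, hp0, zero_mul] at hp_low
    exact hn'.not_ge hp_low
  · by_contra! hp1
    have : #{i | p ≤ b i} = 0 := by
      rw [card_eq_zero, filter_eq_empty_iff]
      exact fun i _ => ((hb i).2.trans_le hp1).not_ge
    rw [this, Nat.cast_zero] at hp_high
    nlinarith

theorem naive_equilibrium_exists (n : ℕ) (hn : 0 < n) (b : Fin n → ℝ)
    (hb : ∀ i, b i ∈ Set.Ioo (0 : ℝ) 1) :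
    ∃ (sA sB : Fin n → ℝ) (p : ℝ), NaiveEquilibrium n b sA sB p := by
  obtain ⟨p, hp, hlow, hhigh⟩ := exists_price_card_bounds hn b hb
  obtain ⟨sA, sB, h⟩ := exists_naiveEquilibrium_of_card_bounds b hp hlow hhigh
  exact ⟨sA, sB, p, h⟩
end

section
/- Fix a belief profile b ∈ (0,1)^n. If (s^A, s^B) with clearing price p and (t^A, t^B) with clearing price p′ are both naive competitive equilibria for b, then p = p′. In other words, the naive competitive equilibrium price is unique. -/
lemma eq_zero_of_clearing_of_lt {p p' a b c d : ℝ} (hp : 0 ≤ p) (hpp' : p < p') (hp' : p' ≤ 1)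
    (ha : 0 ≤ a) (hd : 0 ≤ d) (hab : (1 - p) * a = p * b) (hcd : (1 - p') * c = p' * d)
    (hca : c ≤ a) (hbd : b ≤ d) : a = 0 ∧ d = 0 := by
  have hpd : p * b ≤ p * d := mul_le_mul_of_nonneg_left hbd hp
  have hpc : (1 - p') * c ≤ (1 - p') * a := mul_le_mul_of_nonneg_left hca (by linarith)
  have hda : (p' - p) * a ≤ 0 := by
    have : p' * ((1 - p) * a) ≤ p * ((1 - p') * a) := calc
      p' * ((1 - p) * a) = p' * (p * b) := by rw [hab]
      _ ≤ p' * (p * d) := mul_le_mul_of_nonneg_left hpd (hp.trans hpp'.le)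
      _ = p * ((1 - p') * c) := by rw [hcd]; ring
      _ ≤ p * ((1 - p') * a) := mul_le_mul_of_nonneg_left hpc hp
    linear_combination this
  have hdd : (p' - p) * d ≤ 0 := by
    have : (1 - p) * (p' * d) ≤ (1 - p') * (p * d) := calc
      (1 - p) * (p' * d) = (1 - p) * ((1 - p') * c) := by rw [hcd]
      _ ≤ (1 - p) * ((1 - p') * a) := mul_le_mul_of_nonneg_left hpc (by linarith)
      _ = (1 - p') * (p * b) := by rw [← hab]; ring
      _ ≤ (1 - p') * (p * d) := mul_le_mul_of_nonneg_left hpd (by linarith)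
    linear_combination this
  have hpos : 0 < p' - p := sub_pos.2 hpp'
  exact ⟨le_antisymm (nonpos_of_mul_nonpos_right hda hpos) ha,
    le_antisymm (nonpos_of_mul_nonpos_right hdd hpos) hd⟩

namespace NaiveEquilibrium

variable {n : ℕ} {b sA sB tA tB : Fin n → ℝ} {p p' : ℝ}

lemma clearing (h : NaiveEquilibrium n b sA sB p) : (1 - p) * ∑ i, sA i = p * ∑ i, sB i := by
  obtain ⟨⟨hp0, hp1⟩, -, hclear, -⟩ := h
  have : 1 - p ≠ 0 := by linarith
  field_simp at hclear
  linear_combination hclear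

lemma sum_A_nonneg (h : NaiveEquilibrium n b sA sB p) : 0 ≤ ∑ i, sA i :=
  Finset.sum_nonneg fun i _ ↦ (h.2.1 i).1.1

lemma sum_B_nonneg (h : NaiveEquilibrium n b sA sB p) : 0 ≤ ∑ i, sB i :=
  Finset.sum_nonneg fun i _ ↦ (h.2.1 i).2.1.1

lemma one_le_sum_A (h : NaiveEquilibrium n b sA sB p) {j : Fin n} (hj : p < b j) :
    1 ≤ ∑ i, sA i :=
  (h.2.2.2.1 j hj).1 ▸ Finset.single_le_sum (fun i _ ↦ (h.2.1 i).1.1) (Finset.mem_univ j)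

lemma one_le_sum_B (h : NaiveEquilibrium n b sA sB p) {j : Fin n} (hj : b j < p) :
    1 ≤ ∑ i, sB i :=
  (h.2.2.2.2 j hj).2 ▸ Finset.single_le_sum (fun i _ ↦ (h.2.1 i).2.1.1) (Finset.mem_univ j)

lemma le_and_le_of_price_lt (hs : NaiveEquilibrium n b sA sB p)
    (ht : NaiveEquilibrium n b tA tB p') (hlt : p < p') (i : Fin n) :
    tA i ≤ sA i ∧ sB i ≤ tB i := by
  rcases le_or_gt (b i) p with hbp | hbp
  · obtain ⟨htA, htB⟩ := ht.2.2.2.2 i (hbp.trans_lt hlt)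
    exact ⟨htA ▸ (hs.2.1 i).1.1, htB ▸ (hs.2.1 i).2.1.2⟩
  · obtain ⟨hsA, hsB⟩ := hs.2.2.2.1 i hbp
    exact ⟨hsA ▸ (ht.2.1 i).1.2, hsB ▸ (ht.2.1 i).2.1.1⟩

lemma not_price_lt (hn : 0 < n) (hs : NaiveEquilibrium n b sA sB p)
    (ht : NaiveEquilibrium n b tA tB p') : ¬ p < p' := by
  intro hlt
  obtain ⟨hsA, htB⟩ := eq_zero_of_clearing_of_lt hs.1.1.le hlt ht.1.2.le hs.sum_A_nonneg
    ht.sum_B_nonneg hs.clearing ht.clearing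
    (Finset.sum_le_sum fun i _ ↦ (hs.le_and_le_of_price_lt ht hlt i).1)
    (Finset.sum_le_sum fun i _ ↦ (hs.le_and_le_of_price_lt ht hlt i).2)
  rcases le_or_gt (b ⟨0, hn⟩) p with hbp | hbp
  · linarith [ht.one_le_sum_B (hbp.trans_lt hlt)]
  · linarith [hs.one_le_sum_A hbp]

end NaiveEquilibrium

theorem naive_equilibrium_price_unique_general (n : ℕ) (hn : 0 < n) (b : Fin n → ℝ)
    (sA sB tA tB : Fin n → ℝ) (p p' : ℝ)
    (hs : NaiveEquilibrium n b sA sB p) (ht : NaiveEquilibrium n b tA tB p') :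
    p = p' :=
  le_antisymm (not_lt.1 (ht.not_price_lt hn hs)) (not_lt.1 (hs.not_price_lt hn ht))

theorem naive_equilibrium_price_unique (n : ℕ) (hn : 0 < n) (b : Fin n → ℝ)
    (hb : ∀ i, b i ∈ Set.Ioo (0 : ℝ) 1)
    (sA sB tA tB : Fin n → ℝ) (p p' : ℝ)
    (hs : NaiveEquilibrium n b sA sB p) (ht : NaiveEquilibrium n b tA tB p') :
    p = p' :=
  naive_equilibrium_price_unique_general n hn b sA sB tA tB p p' hs ht
end

section
/- Let b ∈ (0,1)^n be a belief profile and let p ∈ (0,1) be a Kelly competitive equilibrium price for b, i.e., the Kelly optimal strategies s_i^A = (b_i − p)/(1−p) for those i with b_i > p (and s_i^A = 0 otherwise), s_i^B = (p − b_i)/p for those i with b_i < p (and s_i^B = 0 otherwise) satisfy the market-clearing condition (1/p)·∑_i s_i^A = (1/(1−p))·∑_i s_i^B. Then p = (1/n)·∑_{i=1}^n b_i, the average belief. -/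
/-- Kelly optimal investment in A-securities for an agent with belief `b` at price `p`. -/
noncomputable def kellySA (b p : ℝ) : ℝ := if b > p then (b - p) / (1 - p) else 0

/-- Kelly optimal investment in B-securities for an agent with belief `b` at price `p`. -/
noncomputable def kellySB (b p : ℝ) : ℝ := if b < p then (p - b) / p else 0

/- Each agent's net demand for A-securities, `s^A / p - s^B / (1 - p)`, is `(b - p) / (p (1 - p))`:
linear in the belief. So the market clears exactly when the beliefs sum to `n p`. -/

theorem kellySA_div_sub_kellySB_div (b : ℝ) {p : ℝ} (hp0 : p ≠ 0) (hp1 : 1 - p ≠ 0) :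
    (1 / p) * kellySA b p - (1 / (1 - p)) * kellySB b p = (b - p) / (p * (1 - p)) := by
  unfold kellySA kellySB
  rcases lt_trichotomy b p with h | rfl | h
  · simp only [gt_iff_lt, not_lt_of_gt h, if_false, h, if_true]
    field_simp
    ring
  · simp
  · simp only [gt_iff_lt, h, if_true, not_lt_of_gt h, if_false]
    field_simp
    ring

theorem sum_sub_eq_zero_of_kelly_clears {ι : Type*} (s : Finset ι) (b : ι → ℝ) {p : ℝ}
    (hp0 : p ≠ 0) (hp1 : 1 - p ≠ 0)
    (hclear : (1 / p) * (∑ i ∈ s, kellySA (b i) p) = (1 / (1 - p)) * (∑ i ∈ s, kellySB (b i) p)) :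
    ∑ i ∈ s, (b i - p) = 0 := by
  have hnet : ∑ i ∈ s, (b i - p) / (p * (1 - p)) = 0 := by
    simp only [← kellySA_div_sub_kellySB_div _ hp0 hp1, Finset.sum_sub_distrib, ← Finset.mul_sum,
      hclear, sub_self]
  rwa [← Finset.sum_div, div_eq_zero_iff, or_iff_left (mul_ne_zero hp0 hp1)] at hnet

theorem kelly_equilibrium_price_is_average_general (n : ℕ) (hn : 0 < n) (b : Fin n → ℝ)
    (p : ℝ) (hp : p ∈ Set.Ioo (0 : ℝ) 1)
    (hclear : (1 / p) * (∑ i, kellySA (b i) p) = (1 / (1 - p)) * (∑ i, kellySB (b i) p)) :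
    p = (1 / n) * ∑ i, b i := by
  have hsum := sum_sub_eq_zero_of_kelly_clears Finset.univ b hp.1.ne' (sub_ne_zero.2 hp.2.ne') hclear
  rw [Finset.sum_sub_distrib, Finset.sum_const, Finset.card_univ, Fintype.card_fin, nsmul_eq_mul,
    sub_eq_zero] at hsum
  have hn' : (n : ℝ) ≠ 0 := Nat.cast_ne_zero.2 hn.ne'
  rw [hsum, one_div, inv_mul_cancel_left₀ hn']

/-- In a Kelly market the competitive equilibrium price is the average belief. -/
theorem kelly_equilibrium_price_is_average (n : ℕ) (hn : 0 < n) (b : Fin n → ℝ)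
    (hb : ∀ i, b i ∈ Set.Ioo (0 : ℝ) 1) (p : ℝ) (hp : p ∈ Set.Ioo (0 : ℝ) 1)
    (hclear : (1 / p) * (∑ i, kellySA (b i) p) = (1 / (1 - p)) * (∑ i, kellySB (b i) p)) :
    p = (1 / n) * ∑ i, b i :=
  kelly_equilibrium_price_is_average_general n hn b p hp hclear
end

section
/- Let b ∈ (0,1)^n be a belief profile. A price p ∈ (0,1) is a Kelly competitive equilibrium price for b (i.e., the Kelly strategies at price p satisfy the market-clearing condition) if and only if p = (1/n)·∑_{i=1}^n b_i. In particular, the Kelly competitive equilibrium price exists and is unique. -/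
/-! At a price `p ∈ (0,1)` an agent with belief `b` demands `(b - p) / (p (1 - p))` A-securities
net of B-securities, on either side of `p`, so the Kelly market clears exactly when the beliefs
sum to `n p`, i.e. when `p` is the average belief. The average of beliefs in `(0,1)` lies in
`(0,1)`, which gives existence. -/

lemma kelly_net_demand (b : ℝ) {p : ℝ} (hp : p ∈ Set.Ioo (0 : ℝ) 1) :
    (1 / p) * kellySA b p - (1 / (1 - p)) * kellySB b p = (b - p) / (p * (1 - p)) := by
  obtain ⟨hp0, hp1⟩ := hp
  have hp1' : 1 - p ≠ 0 := by linarith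
  rcases lt_trichotomy b p with hbp | rfl | hbp
  · simp only [kellySA, kellySB, if_neg (not_lt.2 hbp.le), if_pos hbp]
    field_simp
    ring
  · simp [kellySA, kellySB]
  · simp only [kellySA, kellySB, gt_iff_lt, if_pos hbp, if_neg (not_lt.2 hbp.le)]
    field_simp
    ring

lemma kelly_market_clears_iff {ι : Type*} (s : Finset ι) (b : ι → ℝ) {p : ℝ}
    (hp : p ∈ Set.Ioo (0 : ℝ) 1) :
    (1 / p) * (∑ i ∈ s, kellySA (b i) p) = (1 / (1 - p)) * (∑ i ∈ s, kellySB (b i) p) ↔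
      ∑ i ∈ s, (b i - p) = 0 := by
  have hnet : (1 / p) * (∑ i ∈ s, kellySA (b i) p) - (1 / (1 - p)) * (∑ i ∈ s, kellySB (b i) p)
      = (∑ i ∈ s, (b i - p)) / (p * (1 - p)) := by
    rw [Finset.mul_sum, Finset.mul_sum, ← Finset.sum_sub_distrib, Finset.sum_div]
    exact Finset.sum_congr rfl fun i _ => kelly_net_demand (b i) hp
  have hden : p * (1 - p) ≠ 0 := mul_ne_zero hp.1.ne' (by linarith [hp.2])
  rw [← sub_eq_zero, hnet, div_eq_zero_iff, or_iff_left hden]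

lemma sum_sub_const_eq_zero_iff {ι : Type*} (s : Finset ι) (hs : s.Nonempty) (b : ι → ℝ) (p : ℝ) :
    ∑ i ∈ s, (b i - p) = 0 ↔ p = (1 / s.card) * ∑ i ∈ s, b i := by
  have hcard : (s.card : ℝ) ≠ 0 := Nat.cast_ne_zero.2 hs.card_pos.ne'
  rw [Finset.sum_sub_distrib, Finset.sum_const, nsmul_eq_mul, sub_eq_zero, one_div,
    eq_inv_mul_iff_mul_eq₀ hcard, eq_comm]

lemma average_mem_Ioo {ι : Type*} (s : Finset ι) (hs : s.Nonempty) (b : ι → ℝ) {x y : ℝ}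
    (hb : ∀ i ∈ s, b i ∈ Set.Ioo x y) :
    (1 / s.card) * ∑ i ∈ s, b i ∈ Set.Ioo x y := by
  have hcard : (0 : ℝ) < s.card := Nat.cast_pos.2 hs.card_pos
  have hlo : s.card * x < ∑ i ∈ s, b i := by
    simpa using Finset.sum_lt_sum_of_nonempty hs fun i hi => (hb i hi).1
  have hhi : ∑ i ∈ s, b i < s.card * y := by
    simpa using Finset.sum_lt_sum_of_nonempty hs fun i hi => (hb i hi).2
  rw [one_div_mul_eq_div]
  exact ⟨(lt_div_iff₀ hcard).2 (by linarith), (div_lt_iff₀ hcard).2 (by linarith)⟩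

/-- A price `p ∈ (0,1)` is a Kelly competitive equilibrium price iff it is the average
belief; in particular the Kelly competitive equilibrium price exists and is unique. -/
theorem kelly_equilibrium_price_iff_average (n : ℕ) (hn : 0 < n) (b : Fin n → ℝ)
    (hb : ∀ i, b i ∈ Set.Ioo (0 : ℝ) 1) :
    (∀ p ∈ Set.Ioo (0 : ℝ) 1,
      ((1 / p) * (∑ i, kellySA (b i) p) = (1 / (1 - p)) * (∑ i, kellySB (b i) p) ↔
        p = (1 / n) * ∑ i, b i)) ∧
    (∃! p : ℝ, p ∈ Set.Ioo (0 : ℝ) 1 ∧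
      (1 / p) * (∑ i, kellySA (b i) p) = (1 / (1 - p)) * (∑ i, kellySB (b i) p)) := by
  have huniv : (Finset.univ : Finset (Fin n)).Nonempty := Finset.univ_nonempty_iff.2 ⟨⟨0, hn⟩⟩
  have hclear : ∀ p ∈ Set.Ioo (0 : ℝ) 1,
      ((1 / p) * (∑ i, kellySA (b i) p) = (1 / (1 - p)) * (∑ i, kellySB (b i) p) ↔
        p = (1 / n) * ∑ i, b i) := fun p hp => by
    rw [kelly_market_clears_iff _ _ hp, sum_sub_const_eq_zero_iff _ huniv, Finset.card_univ,
      Fintype.card_fin]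
  have havg : (1 / n) * ∑ i, b i ∈ Set.Ioo (0 : ℝ) 1 := by
    have := average_mem_Ioo _ huniv b fun i _ => hb i
    rwa [Finset.card_univ, Fintype.card_fin] at this
  exact ⟨hclear, ⟨_, ⟨havg, (hclear _ havg).2 rfl⟩, fun q ⟨hq, hq'⟩ => (hclear q hq).1 hq'⟩⟩
end

section
/- Let q ∈ (1/2, 1)^n be a competence profile, v ∈ {0,1}^n a vote profile, b the induced belief profile b_i = v_i·q_i + (1−v_i)·(1−q_i), and let p ∈ (0,1) be a Kelly competitive equilibrium price for b. Set w_i = 2q_i − 1. Then p > 1/2 if and only if ∑_i w_i v_i > (1/2)∑_i w_i; p < 1/2 if and only if ∑_i w_i v_i < (1/2)∑_i w_i; and p = 1/2 if and only if ∑_i w_i v_i = (1/2)∑_i w_i. In other words, the binarized Kelly equilibrium price coincides with the outcome of weighted majority voting with weights proportional to 2q_i − 1. -/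
noncomputable def kellyExcessDemand (b p : ℝ) : ℝ :=
  (1 / p) * kellySA b p - (1 / (1 - p)) * kellySB b p

theorem kellyExcessDemand_eq {b p : ℝ} (hp₀ : p ≠ 0) (hp₁ : 1 - p ≠ 0) :
    kellyExcessDemand b p = (b - p) / (p * (1 - p)) := by
  unfold kellyExcessDemand kellySA kellySB
  rcases lt_trichotomy b p with h | rfl | h
  · rw [if_neg h.not_gt, if_pos h]
    field_simp
    ring
  · simp
  · rw [if_pos h, if_neg h.not_gt]
    field_simp
    ring

theorem kelly_clearing_iff_sum_eq_card_mul {ι : Type*} [Fintype ι] (b : ι → ℝ) {p : ℝ}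
    (hp₀ : p ≠ 0) (hp₁ : 1 - p ≠ 0) :
    (1 / p) * (∑ i, kellySA (b i) p) = (1 / (1 - p)) * (∑ i, kellySB (b i) p) ↔
      ∑ i, b i = Fintype.card ι * p := by
  have hdemand : ∑ i, kellyExcessDemand (b i) p = (∑ i, b i - Fintype.card ι * p) / (p * (1 - p)) := by
    simp only [kellyExcessDemand_eq hp₀ hp₁, ← Finset.sum_div, Finset.sum_sub_distrib,
      Finset.sum_const, Finset.card_univ, nsmul_eq_mul]
  simp only [kellyExcessDemand, Finset.sum_sub_distrib, ← Finset.mul_sum] at hdemand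
  rw [← sub_eq_zero, hdemand, div_eq_zero_iff, sub_eq_zero]
  simp [hp₀, hp₁]

theorem weighted_vote_margin_eq (q v : ℝ) :
    (2 * q - 1) * v - 1 / 2 * (2 * q - 1) = v * q + (1 - v) * (1 - q) - 1 / 2 := by
  ring

theorem lt_gt_eq_iff_of_sub_eq_mul {x y p a c : ℝ} (hc : 0 < c) (h : x - y = c * (p - a)) :
    (p > a ↔ x > y) ∧ (p < a ↔ x < y) ∧ (p = a ↔ x = y) := by
  refine ⟨⟨fun h' => ?_, fun h' => ?_⟩, ⟨fun h' => ?_, fun h' => ?_⟩, ⟨fun h' => ?_, fun h' => ?_⟩⟩ <;>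
    nlinarith

theorem kelly_equilibrium_weighted_majority_general (n : ℕ) (hn : 0 < n)
    (q v b w : Fin n → ℝ)
    (hbdef : ∀ i, b i = v i * q i + (1 - v i) * (1 - q i))
    (hw : ∀ i, w i = 2 * q i - 1)
    (p : ℝ) (hp : p ∈ Set.Ioo (0 : ℝ) 1)
    (hclear : (1 / p) * (∑ i, kellySA (b i) p) = (1 / (1 - p)) * (∑ i, kellySB (b i) p)) :
    (p > 1 / 2 ↔ ∑ i, w i * v i > (1 / 2) * ∑ i, w i) ∧
    (p < 1 / 2 ↔ ∑ i, w i * v i < (1 / 2) * ∑ i, w i) ∧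
    (p = 1 / 2 ↔ ∑ i, w i * v i = (1 / 2) * ∑ i, w i) := by
  have hmean : ∑ i, b i = n * p := by
    simpa using (kelly_clearing_iff_sum_eq_card_mul b hp.1.ne' (sub_ne_zero.2 hp.2.ne')).1 hclear
  have hmargin : ∑ i, w i * v i - 1 / 2 * ∑ i, w i = n * (p - 1 / 2) := by
    calc ∑ i, w i * v i - 1 / 2 * ∑ i, w i = ∑ i, (b i - 1 / 2) := by
          rw [Finset.mul_sum, ← Finset.sum_sub_distrib]
          simp only [hw, hbdef, weighted_vote_margin_eq]
      _ = n * (p - 1 / 2) := by simp [Finset.sum_sub_distrib, hmean, mul_sub]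
  exact lt_gt_eq_iff_of_sub_eq_mul (Nat.cast_pos.2 hn) hmargin

/-- The binarized Kelly equilibrium price coincides with the outcome of weighted
majority voting with weights `w i = 2 * q i - 1`. -/
theorem kelly_equilibrium_weighted_majority (n : ℕ) (hn : 0 < n)
    (q v b w : Fin n → ℝ)
    (hq : ∀ i, q i ∈ Set.Ioo (1 / 2 : ℝ) 1)
    (hv : ∀ i, v i = 0 ∨ v i = 1)
    (hbdef : ∀ i, b i = v i * q i + (1 - v i) * (1 - q i))
    (hw : ∀ i, w i = 2 * q i - 1)
    (p : ℝ) (hp : p ∈ Set.Ioo (0 : ℝ) 1)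
    (hclear : (1 / p) * (∑ i, kellySA (b i) p) = (1 / (1 - p)) * (∑ i, kellySB (b i) p)) :
    (p > 1 / 2 ↔ ∑ i, w i * v i > (1 / 2) * ∑ i, w i) ∧
    (p < 1 / 2 ↔ ∑ i, w i * v i < (1 / 2) * ∑ i, w i) ∧
    (p = 1 / 2 ↔ ∑ i, w i * v i = (1 / 2) * ∑ i, w i) :=
  kelly_equilibrium_weighted_majority_general n hn q v b w hbdef hw p hp hclear
end

section
/- Fix p ∈ (0,1) and b ∈ (p,1) with b < 1, and set y* = ln( ((1−p)/p) · (b/(1−b)) ). Suppose for every k > 0 we are given y_k ∈ [0, k) satisfying the first-order condition of the taxed Kelly utility, namely (k·b·e^{−y_k}) / (k·p/(1−p) + 1 − e^{−y_k}) = (1−b)/(1 − y_k/k), and suppose the family (y_k)_{k>0} is bounded. Then y_k → y* as k → ∞. Equivalently, writing s_k = y_k/k for the corresponding investment fraction, k·s_k converges to ln( ((1−p)/p) · (b/(1−b)) ). -/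
/-!
Clearing denominators, the first-order condition reads
`e^{-y_k} (b (k - y_k) + 1 - b) = (1 - b) (k p / (1 - p) + 1)`.
Dividing by `k` and using `y_k / k → 0` (from boundedness) gives
`e^{-y_k} → (1 - b) p / (b (1 - p))`, and taking logarithms yields the limit.
-/

open Filter Topology Real

lemma foc_mul_eq {k b d e y : ℝ} (hk : k ≠ 0) (hyk : y ≠ k) (hde : d + 1 - e ≠ 0)
    (hfoc : k * b * e / (d + 1 - e) = (1 - b) / (1 - y / k)) :
    e * (b * (k - y) + (1 - b)) = (1 - b) * (d + 1) := by
  have hyk' : 1 - y / k ≠ 0 := by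
    rw [sub_ne_zero, ne_comm, Ne, div_eq_one_iff_eq hk]
    exact hyk
  rw [div_eq_div_iff hde hyk'] at hfoc
  field_simp at hfoc
  linear_combination hfoc

lemma tendsto_div_atTop_zero_of_abs_le {y : ℝ → ℝ} {M : ℝ} (h : ∀ k > (0 : ℝ), |y k| ≤ M) :
    Tendsto (fun k => y k / k) atTop (𝓝 0) := by
  have hbdd : IsBoundedUnder (· ≤ ·) atTop (norm ∘ y) :=
    ⟨M, eventually_map.2 <| (eventually_gt_atTop 0).mono fun k hk => h k hk⟩
  simpa only [div_eq_inv_mul] using tendsto_inv_atTop_zero.zero_mul_isBoundedUnder_le hbdd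

lemma tendsto_of_eventually_mul_eq {b c : ℝ} (hb : b ≠ 0) {e y : ℝ → ℝ}
    (hy : Tendsto (fun k => y k / k) atTop (𝓝 0))
    (he : ∀ᶠ k in atTop, e k * (b * (k - y k) + (1 - b)) = (1 - b) * (k * c + 1)) :
    Tendsto e atTop (𝓝 ((1 - b) * c / b)) := by
  have hden : Tendsto (fun k => b * (1 - y k / k) + (1 - b) * k⁻¹) atTop (𝓝 b) := by
    simpa using (((tendsto_const_nhds (x := (1 : ℝ))).sub hy).const_mul b).add
      (tendsto_inv_atTop_zero.const_mul (1 - b))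
  have hnum : Tendsto (fun k => (1 - b) * (c + k⁻¹)) atTop (𝓝 ((1 - b) * c)) := by
    simpa using (tendsto_const_nhds.add tendsto_inv_atTop_zero).const_mul (1 - b)
  refine (hnum.div hden hb).congr' ?_
  filter_upwards [he, hden.eventually_ne hb, eventually_gt_atTop 0] with k hk hden0 hk0
  rw [Pi.div_apply, div_eq_iff hden0]
  field_simp
  linear_combination -hk

theorem taxed_foc_limit_general (p b : ℝ) (hp : p ∈ Set.Ioo (0 : ℝ) 1)
    (hb : b ∈ Set.Ioo p 1) (y : ℝ → ℝ)
    (hy : ∀ k > (0 : ℝ), y k ∈ Set.Ico (0 : ℝ) k ∧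
      (k * b * Real.exp (-(y k))) / (k * p / (1 - p) + 1 - Real.exp (-(y k)))
        = (1 - b) / (1 - y k / k))
    (hbdd : ∃ M : ℝ, ∀ k > (0 : ℝ), |y k| ≤ M) :
    Filter.Tendsto y Filter.atTop
      (nhds (Real.log ((1 - p) / p * (b / (1 - b))))) := by
  obtain ⟨hp0, hp1⟩ := hp
  obtain ⟨hpb, hb1⟩ := hb
  obtain ⟨M, hM⟩ := hbdd
  have hb0 : 0 < b := hp0.trans hpb
  have hc : 0 < p / (1 - p) := div_pos hp0 (sub_pos.2 hp1)
  have hmul : ∀ᶠ k in atTop, exp (-y k) * (b * (k - y k) + (1 - b))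
      = (1 - b) * (k * (p / (1 - p)) + 1) := by
    filter_upwards [eventually_gt_atTop 0] with k hk
    obtain ⟨⟨hy0, hyk⟩, hfoc⟩ := hy k hk
    have he : exp (-y k) ≤ 1 := exp_le_one_iff.2 (neg_nonpos.2 hy0)
    have hd : 0 < k * p / (1 - p) := div_pos (mul_pos hk hp0) (sub_pos.2 hp1)
    rw [← mul_div_assoc]
    exact foc_mul_eq hk.ne' hyk.ne (by linarith) hfoc
  have hexp := tendsto_of_eventually_mul_eq hb0.ne' (tendsto_div_atTop_zero_of_abs_le hM) hmul
  have hL : 0 < (1 - b) * (p / (1 - p)) / b := div_pos (mul_pos (sub_pos.2 hb1) hc) hb0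
  have hlim : -log ((1 - b) * (p / (1 - p)) / b) = log ((1 - p) / p * (b / (1 - b))) := by
    rw [← log_inv]
    congr 1
    have h1p := (sub_pos.2 hp1).ne'
    have h1b := (sub_pos.2 hb1).ne'
    field_simp
  simpa [hlim] using (hexp.log hL.ne').neg

/-- Any bounded family of solutions of the first-order condition of the taxed Kelly
utility converges, as the taxation parameter `k → ∞`, to
`ln( ((1-p)/p) · (b/(1-b)) )`. -/
theorem taxed_foc_limit (p b : ℝ) (hp : p ∈ Set.Ioo (0 : ℝ) 1)
    (hb : b ∈ Set.Ioo p 1) (hb1 : b < 1) (y : ℝ → ℝ)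
    (hy : ∀ k > (0 : ℝ), y k ∈ Set.Ico (0 : ℝ) k ∧
      (k * b * Real.exp (-(y k))) / (k * p / (1 - p) + 1 - Real.exp (-(y k)))
        = (1 - b) / (1 - y k / k))
    (hbdd : ∃ M : ℝ, ∀ k > (0 : ℝ), |y k| ≤ M) :
    Filter.Tendsto y Filter.atTop
      (nhds (Real.log ((1 - p) / p * (b / (1 - b))))) :=
  taxed_foc_limit_general p b hp hb y hy hbdd
end

section
/- Let q ∈ (1/2, 1)^n be a competence profile, v ∈ {0,1}^n a vote profile, and let b be the induced belief profile b_i = v_i·q_i + (1−v_i)·(1−q_i). Let p* ∈ (0,1) be the unique solution of ln(p*/(1−p*)) = (1/n)·∑_{i=1}^n ln(b_i/(1−b_i)), and set w_i = ln(q_i/(1−q_i)). Then p* > 1/2 if and only if ∑_i w_i v_i > (1/2)∑_i w_i; p* < 1/2 if and only if ∑_i w_i v_i < (1/2)∑_i w_i; and p* = 1/2 if and only if ∑_i w_i v_i = (1/2)∑_i w_i. In other words, binarizing p* yields exactly the outcome of weighted majority voting with the log-odds weights w_i = ln(q_i/(1−q_i)). -/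
/-!
Each belief has log-odds `±wᵢ`, with sign `+` exactly for a vote for `A`, so the sum of the
belief log-odds is `2 (∑ wᵢ vᵢ - ½ ∑ wᵢ)`. The log-odds of `p*` is the mean of these, and on
`(0, 1)` the log-odds has the sign of `p - ½`; comparing signs gives all three equivalences.
-/

open Finset

noncomputable def logOdds (p : ℝ) : ℝ := Real.log (p / (1 - p))

lemma logOdds_one_sub (p : ℝ) : logOdds (1 - p) = -logOdds p := by
  rw [logOdds, logOdds, sub_sub_cancel, ← inv_div, Real.log_inv]

lemma sign_log_eq_sign_sub_one {x : ℝ} (hx : 0 < x) :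
    SignType.sign (Real.log x) = SignType.sign (x - 1) := by
  rcases lt_trichotomy x 1 with h | rfl | h
  · rw [sign_neg (Real.log_neg hx h), sign_neg (sub_neg.2 h)]
  · simp
  · rw [sign_pos (Real.log_pos h), sign_pos (sub_pos.2 h)]

lemma sign_logOdds {p : ℝ} (hp : p ∈ Set.Ioo 0 1) :
    SignType.sign (logOdds p) = SignType.sign (p - 1 / 2) := by
  obtain ⟨hp0, hp1⟩ := hp
  have hq : 0 < 1 - p := sub_pos.2 hp1
  have h : p / (1 - p) - 1 = 2 / (1 - p) * (p - 1 / 2) := by field_simp; ring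
  rw [logOdds, sign_log_eq_sign_sub_one (div_pos hp0 hq), h, sign_mul,
    sign_pos (div_pos two_pos hq), one_mul]

lemma logOdds_vote_belief {v q : ℝ} (hv : v = 0 ∨ v = 1) :
    logOdds (v * q + (1 - v) * (1 - q)) = (2 * v - 1) * logOdds q := by
  rcases hv with rfl | rfl <;> norm_num [logOdds_one_sub]

-- For `n = 0` the factor `1 / n` is the junk value `0`, but then the sum is empty.
lemma sign_one_div_mul_sum {n : ℕ} (f : Fin n → ℝ) :
    SignType.sign ((1 / n : ℝ) * ∑ i, f i) = SignType.sign (∑ i, f i) := by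
  rcases n.eq_zero_or_pos with rfl | hn
  · simp
  · rw [sign_mul, sign_pos (by positivity), one_mul]

lemma gt_iff_and_lt_iff_and_eq_iff_of_sign_sub_eq {x a y b : ℝ}
    (h : SignType.sign (x - a) = SignType.sign (y - b)) :
    (x > a ↔ y > b) ∧ (x < a ↔ y < b) ∧ (x = a ↔ y = b) := by
  refine ⟨?_, ?_, ?_⟩
  · rw [gt_iff_lt, gt_iff_lt, ← sub_pos, ← sign_eq_one_iff, h, sign_eq_one_iff, sub_pos]
  · rw [← sub_neg, ← sign_eq_neg_one_iff, h, sign_eq_neg_one_iff, sub_neg]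
  · rw [← sub_eq_zero, ← sign_eq_zero_iff, h, sign_eq_zero_iff, sub_eq_zero]

theorem taxed_price_log_odds_majority_general (n : ℕ) (q v b w : Fin n → ℝ)
    (hv : ∀ i, v i = 0 ∨ v i = 1)
    (hbdef : ∀ i, b i = v i * q i + (1 - v i) * (1 - q i))
    (hw : ∀ i, w i = Real.log (q i / (1 - q i)))
    (p : ℝ) (hp : p ∈ Set.Ioo (0 : ℝ) 1)
    (hpstar : Real.log (p / (1 - p)) = (1 / n) * ∑ i, Real.log (b i / (1 - b i))) :
    (p > 1 / 2 ↔ ∑ i, w i * v i > (1 / 2) * ∑ i, w i) ∧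
    (p < 1 / 2 ↔ ∑ i, w i * v i < (1 / 2) * ∑ i, w i) ∧
    (p = 1 / 2 ↔ ∑ i, w i * v i = (1 / 2) * ∑ i, w i) := by
  have hbelief : ∀ i, logOdds (b i) = (2 * v i - 1) * w i := fun i => by
    rw [hbdef i, hw i]; exact logOdds_vote_belief (hv i)
  have hsum : ∑ i, logOdds (b i) = 2 * (∑ i, w i * v i - 1 / 2 * ∑ i, w i) := by
    simp only [hbelief, sub_mul, one_mul, mul_assoc, sum_sub_distrib, ← mul_sum,
      mul_comm (v _) (w _)]
    ring
  have hprice : logOdds p = (1 / n) * ∑ i, logOdds (b i) := hpstar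
  apply gt_iff_and_lt_iff_and_eq_iff_of_sign_sub_eq
  rw [← sign_logOdds hp, hprice, sign_one_div_mul_sum, hsum, sign_mul, sign_pos two_pos, one_mul]

/-- Binarizing the asymptotic taxed-market equilibrium price `p*`, characterized by
`ln(p*/(1-p*)) = (1/n) ∑ᵢ ln(bᵢ/(1-bᵢ))`, yields exactly the outcome of weighted
majority voting with the log-odds weights `w i = ln(q i/(1-q i))`. -/
theorem taxed_price_log_odds_majority (n : ℕ) (q v b w : Fin n → ℝ)
    (hq : ∀ i, q i ∈ Set.Ioo (1 / 2 : ℝ) 1)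
    (hv : ∀ i, v i = 0 ∨ v i = 1)
    (hbdef : ∀ i, b i = v i * q i + (1 - v i) * (1 - q i))
    (hw : ∀ i, w i = Real.log (q i / (1 - q i)))
    (p : ℝ) (hp : p ∈ Set.Ioo (0 : ℝ) 1)
    (hpstar : Real.log (p / (1 - p)) = (1 / n) * ∑ i, Real.log (b i / (1 - b i))) :
    (p > 1 / 2 ↔ ∑ i, w i * v i > (1 / 2) * ∑ i, w i) ∧
    (p < 1 / 2 ↔ ∑ i, w i * v i < (1 / 2) * ∑ i, w i) ∧
    (p = 1 / 2 ↔ ∑ i, w i * v i = (1 / 2) * ∑ i, w i) :=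
  taxed_price_log_odds_majority_general n q v b w hv hbdef hw p hp hpstar
end
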